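/- arXiv:1502.04231 — 2 statements merged into one kernel-verified Lean document; each statement's English description precedes it below -/
import Mathlib

section
/- Let X = (x₀, x₁, x₂) ∈ ℝ³ with 0 < x₀ < x₁ < x₂ and x₀, x₁, x₂ linearly independent over ℚ, and consider any run of the Smallest Vector Algorithm started at X. Then the following three assertions are equivalent: (a) lim_{s→∞, s∈T} A⁽ˢ⁾/‖g_III'⁽ˢ⁾‖² = 0; (b) lim_{s→∞, s∈T} ρ⁽ˢ⁾/‖g_III'⁽ˢ⁾‖ = 0; (c) lim_{s→∞, s∈T} ( ‖g_I'⁽ˢ⁾‖/‖g_II'⁽ˢ⁾‖ + (π − ∠(g_II'⁽ˢ⁾, g_III'⁽ˢ⁾)) ) = 0, where ∠ denotes the undirected angle. -/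
open Filter InnerProductGeometry Polynomial

noncomputable section

abbrev E3 := EuclideanSpace ℝ (Fin 3)

/-- Identify a plain function `Fin 3 → ℝ` with a point of Euclidean 3-space. -/
def toE3 (v : Fin 3 → ℝ) : E3 := (WithLp.equiv 2 (Fin 3 → ℝ)).symm v

/-- The point of Euclidean 3-space attached to an integer vector. -/
def toR3 (v : Fin 3 → ℤ) : E3 := toE3 fun i => (v i : ℝ)

/-- Orthogonal projection of `h` onto the line `ℝ·X` (written `h''`). -/
def projL (X h : E3) : E3 := ((inner ℝ h X : ℝ) / ‖X‖ ^ 2) • X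

/-- Orthogonal projection of `h` onto the plane `X^⊥` (written `h'`). -/
def projPl (X h : E3) : E3 := h - projL X h

/-- `gᵢ'` : projection of the `i`-th column onto the plane `X^⊥`. -/
def colP (X : E3) (g : Fin 3 → Fin 3 → ℤ) (i : Fin 3) : E3 := projPl X (toR3 (g i))

/-- `gᵢ''` : projection of the `i`-th column onto the line `ℝ·X`. -/
def colL (X : E3) (g : Fin 3 → Fin 3 → ℤ) (i : Fin 3) : E3 := projL X (toR3 (g i))

def max3 (f : Fin 3 → ℝ) : ℝ := max (f 0) (max (f 1) (f 2))

def min3 (f : Fin 3 → ℝ) : ℝ := min (f 0) (min (f 1) (f 2))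

/-- One step of the Smallest Vector Algorithm: from the columns `g` to the columns `g'`. -/
def SVAStep (X : E3) (g g' : Fin 3 → Fin 3 → ℤ) : Prop :=
  ∃ f : Fin 3 → Fin 3 → ℤ,
    ((min3 ![‖colP X g 1 - colP X g 0‖, ‖colP X g 2 - colP X g 1‖, ‖colP X g 2 - colP X g 0‖]
        = ‖colP X g 1 - colP X g 0‖ ∧ f = ![g 0, g 1 - g 0, g 2]) ∨
     (min3 ![‖colP X g 1 - colP X g 0‖, ‖colP X g 2 - colP X g 1‖, ‖colP X g 2 - colP X g 0‖]
        = ‖colP X g 2 - colP X g 1‖ ∧ f = ![g 0, g 1, g 2 - g 1]) ∨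
     (min3 ![‖colP X g 1 - colP X g 0‖, ‖colP X g 2 - colP X g 1‖, ‖colP X g 2 - colP X g 0‖]
        = ‖colP X g 2 - colP X g 0‖ ∧ f = ![g 0, g 1, g 2 - g 0])) ∧
    ∃ σ : Equiv.Perm (Fin 3), (∀ i, g' i = f (σ i)) ∧
      ‖colL X g' 0‖ ≤ ‖colL X g' 1‖ ∧ ‖colL X g' 1‖ ≤ ‖colL X g' 2‖

/-- A run of the Smallest Vector Algorithm started at `X`: `g s i` is the `i`-th column of `G⁽ˢ⁾`. -/
def IsSVARun (X : E3) (g : ℕ → Fin 3 → Fin 3 → ℤ) : Prop :=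
  (∀ i j, g 0 i j = if i = j then 1 else 0) ∧ ∀ s, SVAStep X (g s) (g (s + 1))

/-- The cofactor vector `X⁽ˢ⁾ = ᵀG⁽ˢ⁾·X`. -/
def cofVec (X : E3) (g : Fin 3 → Fin 3 → ℤ) (i : Fin 3) : ℝ := (inner ℝ (toR3 (g i)) X : ℝ)

/-- The cross product of two vectors of Euclidean 3-space. -/
def cross3 (u v : E3) : E3 :=
  toE3 ![u 1 * v 2 - u 2 * v 1, u 2 * v 0 - u 0 * v 2, u 0 * v 1 - u 1 * v 0]

/-- `A⁽ˢ⁾`: twice the area of the triangle with vertices `u`, `v`, `w`. -/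
def twiceArea (u v w : E3) : ℝ := ‖cross3 u v + cross3 v w + cross3 w u‖

/-- The hexagon `H'⁽ˢ⁾`: convex hull of `±g₀', ±g₁', ±g₂'` in the plane `X^⊥`. -/
def hexHull (Y : E3) (g : Fin 3 → Fin 3 → ℤ) : Set E3 :=
  convexHull ℝ {colP Y g 0, colP Y g 1, colP Y g 2, -colP Y g 0, -colP Y g 1, -colP Y g 2}

/-- `ρ⁽ˢ⁾`: the radius of the greatest disk of the plane `X^⊥` centered at `0`
contained in the hexagon `H'⁽ˢ⁾`. -/
def inRadius (Y : E3) (g : Fin 3 → Fin 3 → ℤ) : ℝ :=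
  sSup {r : ℝ | 0 ≤ r ∧ {y : E3 | (inner ℝ y Y : ℝ) = 0 ∧ ‖y‖ ≤ r} ⊆ hexHull Y g}

/-!
For `s ∈ T` the longest projected column grows, so the step created it as the shortest of the
three projected differences: the projections `gᵢ'` lie in the disk of radius
`c = ‖g_III'‖` and are pairwise more than `c` apart. For such triangles the three quantities
control each other.

(a) ⇒ (c): project onto the line through `g_II'` and `g_III'`. The side conditions force the
projection of `g_I'` to lie between the other two, and then a (twice) area `≤ εc²` forces
`‖g_I'‖ ≤ 4εc` and `g_II' ≈ -g_III'`, i.e. `π - ∠(g_II', g_III') = O(ε)`.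

(c) ⇒ (b): the hexagon lies in the slab `|⟪·, n⟫| ≤ (‖g_I'‖ + ‖g_III'‖ sin ∠(g_II', g_III')) ‖n‖`,
where `n = X × g_III'` is normal to `g_III'` in the plane `X^⊥`.

(b) ⇒ (a): by Cramer's rule the rhombus with vertices `±gᵢ', ±gⱼ'` contains the disk of radius
`‖gᵢ' × gⱼ'‖² / (4c³)`, so `‖gᵢ' × gⱼ'‖ ≤ 2c² √(ρ/c)` and `A ≤ 6c² √(ρ/c)`.
-/

open Real Topology
open scoped RealInnerProductSpace

section CrossProduct

lemma inner_E3 (x y : E3) : ⟪x, y⟫ = x 0 * y 0 + x 1 * y 1 + x 2 * y 2 := by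
  simp [PiLp.inner_apply, Fin.sum_univ_three]; ring

lemma norm_sq_E3 (x : E3) : ‖x‖ ^ 2 = x 0 ^ 2 + x 1 ^ 2 + x 2 ^ 2 := by
  rw [← real_inner_self_eq_norm_sq, inner_E3]; ring

@[simp] lemma cross3_apply_zero (u v : E3) : cross3 u v 0 = u 1 * v 2 - u 2 * v 1 := rfl
@[simp] lemma cross3_apply_one (u v : E3) : cross3 u v 1 = u 2 * v 0 - u 0 * v 2 := rfl
@[simp] lemma cross3_apply_two (u v : E3) : cross3 u v 2 = u 0 * v 1 - u 1 * v 0 := rfl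

lemma cross3_anticomm (u v : E3) : cross3 v u = -cross3 u v := by
  ext i; fin_cases i <;> simp <;> ring

lemma norm_cross3_sq (u v : E3) : ‖cross3 u v‖ ^ 2 = ‖u‖ ^ 2 * ‖v‖ ^ 2 - ⟪u, v⟫ ^ 2 := by
  simp only [norm_sq_E3, inner_E3, cross3_apply_zero, cross3_apply_one, cross3_apply_two]; ring

lemma inner_cross3_left (u v : E3) : ⟪cross3 u v, u⟫ = 0 := by
  rw [inner_E3]; simp; ring

lemma inner_cross3_right (u v : E3) : ⟪cross3 u v, v⟫ = 0 := by
  rw [inner_E3]; simp; ring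

lemma inner_cross3_cycle (u v w : E3) : ⟪u, cross3 v w⟫ = ⟪v, cross3 w u⟫ := by
  rw [inner_E3, inner_E3]; simp; ring

lemma norm_cross3 (u v : E3) : ‖cross3 u v‖ = ‖u‖ * ‖v‖ * sin (angle u v) := by
  rw [mul_comm, sin_angle_mul_norm_mul_norm, ← sqrt_sq (norm_nonneg _), norm_cross3_sq,
    real_inner_self_eq_norm_sq, real_inner_self_eq_norm_sq]
  ring_nf

/-- Cramer's rule in the frame `x × y, x, y`. -/
lemma norm_cross3_sq_smul (x y z : E3) :
    ‖cross3 x y‖ ^ 2 • z = ⟪z, cross3 x y⟫ • cross3 x y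
      + (⟪z, x⟫ * ‖y‖ ^ 2 - ⟪z, y⟫ * ⟪x, y⟫) • x
      + (⟪z, y⟫ * ‖x‖ ^ 2 - ⟪z, x⟫ * ⟪x, y⟫) • y := by
  simp only [norm_sq_E3, inner_E3]
  ext i; fin_cases i <;> simp <;> ring

lemma inner_cross3_eq_zero_of_orthogonal {Y x y z : E3} (hY : Y ≠ 0) (hx : ⟪x, Y⟫ = 0)
    (hy : ⟪y, Y⟫ = 0) (hz : ⟪z, Y⟫ = 0) : ⟪z, cross3 x y⟫ = 0 := by
  have hYn : ‖cross3 x y‖ ^ 2 • Y = ⟪Y, cross3 x y⟫ • cross3 x y := by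
    rw [norm_cross3_sq_smul x y Y, real_inner_comm x Y, real_inner_comm y Y, hx, hy]; simp
  have hz' := congrArg (⟪z, ·⟫) hYn
  have hY' := congrArg (⟪Y, ·⟫) hYn
  simp only [inner_smul_right, hz, mul_zero, real_inner_self_eq_norm_sq] at hz' hY'
  rcases mul_eq_zero.1 hz'.symm with h | h
  · rw [h, zero_mul] at hY'
    have : cross3 x y = 0 := by simpa [hY] using hY'
    simp [this]
  · exact h

lemma twiceArea_eq_norm_cross3_sub (u v w : E3) : twiceArea u v w = ‖cross3 (u - v) (w - v)‖ := by
  rw [twiceArea, ← norm_neg]; congr 1; ext i; fin_cases i <;> simp <;> ring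

lemma twiceArea_sq (u v w : E3) :
    twiceArea u v w ^ 2 = ‖u - v‖ ^ 2 * ‖w - v‖ ^ 2 - ⟪u - v, w - v⟫ ^ 2 := by
  rw [twiceArea_eq_norm_cross3_sub, norm_cross3_sq]

lemma twiceArea_rotate (u v w : E3) : twiceArea v w u = twiceArea u v w := by
  unfold twiceArea; congr 1; abel

lemma twiceArea_swap (u v w : E3) : twiceArea u w v = twiceArea u v w := by
  rw [twiceArea, twiceArea, ← norm_neg, cross3_anticomm u w, cross3_anticomm w v,
    cross3_anticomm v u]
  congr 1; abel

lemma twiceArea_comp_perm (p : Fin 3 → E3) (τ : Equiv.Perm (Fin 3)) :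
    twiceArea (p (τ 0)) (p (τ 1)) (p (τ 2)) = twiceArea (p 0) (p 1) (p 2) := by
  have hτ : (τ 0, τ 1, τ 2) ∈ ({(0, 1, 2), (0, 2, 1), (1, 0, 2), (1, 2, 0), (2, 0, 1), (2, 1, 0)} :
      Finset (Fin 3 × Fin 3 × Fin 3)) := by
    revert τ; decide
  simp only [Finset.mem_insert, Finset.mem_singleton, Prod.mk.injEq] at hτ
  rcases hτ with ⟨h0, h1, h2⟩ | ⟨h0, h1, h2⟩ | ⟨h0, h1, h2⟩ | ⟨h0, h1, h2⟩ | ⟨h0, h1, h2⟩ |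
    ⟨h0, h1, h2⟩ <;> rw [h0, h1, h2] <;>
  first
    | exact twiceArea_swap _ _ _
    | exact twiceArea_rotate _ _ _
    | exact (twiceArea_rotate _ _ _).symm
    | exact (twiceArea_rotate _ _ _).trans (twiceArea_swap _ _ _)
    | exact (twiceArea_swap _ _ _).trans (twiceArea_rotate _ _ _)

lemma norm_cross3_of_inner_eq_zero {Y w : E3} (hwY : ⟪w, Y⟫ = 0) :
    ‖cross3 Y w‖ = ‖Y‖ * ‖w‖ := by
  rw [← sq_eq_sq₀ (norm_nonneg _) (by positivity), norm_cross3_sq, real_inner_comm, hwY]; ring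

lemma cross3_ne_zero_of_inner_eq_zero {Y w : E3} (hY : Y ≠ 0) (hw : w ≠ 0) (hwY : ⟪w, Y⟫ = 0) :
    cross3 Y w ≠ 0 := by
  rw [← norm_ne_zero_iff, norm_cross3_of_inner_eq_zero hwY]
  exact mul_ne_zero (norm_ne_zero_iff.2 hY) (norm_ne_zero_iff.2 hw)

end CrossProduct

section Needle

/- The next three lemmas are `needle_of_small_area` in coordinates: `a, b, c` are `‖u‖, ‖v‖, ‖w‖`,
`tu, tv, tw` the coordinates of `u, v, w` along the line through `v` and `w`, `d` the distance of
that line from `0`, `ν` the distance of `u` from its parallel through `0`, and `δ` the distance of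
`u` from the line itself. -/

lemma lt_abs_sub_of_area_le {ε c tu tv tw δ : ℝ} (hε : 0 ≤ ε) (hε1 : ε ≤ 1 / 10) (hc : 0 < c)
    (hδ : 0 ≤ δ) (huv : c ^ 2 < (tu - tv) ^ 2 + δ ^ 2) (huw : c ^ 2 < (tu - tw) ^ 2 + δ ^ 2)
    (hvw : c < tw - tv) (harea : δ * (tw - tv) ≤ ε * c ^ 2) :
    δ ≤ ε * c ∧ c * (1 - ε ^ 2) < |tu - tv| ∧ c * (1 - ε ^ 2) < |tu - tw| := by
  have hδc : δ ≤ ε * c := by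
    by_contra! h
    nlinarith [mul_lt_mul_of_pos_left hvw (lt_of_le_of_lt (by positivity) h),
      mul_lt_mul_of_pos_right h hc]
  have hc' : 0 ≤ c * (1 - ε ^ 2) := mul_nonneg hc.le (by nlinarith)
  have hgap : (c * (1 - ε ^ 2)) ^ 2 ≤ c ^ 2 - δ ^ 2 := by
    nlinarith only [pow_le_pow_left₀ hδ hδc 2,
      mul_nonneg (sq_nonneg c) (mul_nonneg (sq_nonneg ε) (by nlinarith : 0 ≤ 1 - ε ^ 2))]
  refine ⟨hδc, ?_, ?_⟩ <;> rw [← abs_of_nonneg hc'] <;> exact sq_lt_sq.1 (by linarith)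

lemma lt_sub_of_area_le {ε c a b tu tv tw d ν δ : ℝ} (hε : 0 ≤ ε) (hε1 : ε ≤ 1 / 10)
    (ha : 0 ≤ a) (hab : a ≤ b) (hbc : b ≤ c) (hd : 0 ≤ d) (hδ : 0 ≤ δ)
    (ha2 : a ^ 2 = tu ^ 2 + ν ^ 2) (hb2 : b ^ 2 = tv ^ 2 + d ^ 2) (hc2 : c ^ 2 = tw ^ 2 + d ^ 2)
    (hvw : c < tw - tv) (hδc : δ ≤ ε * c) (hνd : d ≤ ν + δ)
    (huv : c * (1 - ε ^ 2) < |tu - tv|) (huw : c * (1 - ε ^ 2) < |tu - tw|) :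
    c * (1 - ε ^ 2) < tu - tv ∧ c * (1 - ε ^ 2) < tw - tu := by
  have hb : 0 ≤ b := ha.trans hab
  have hc : 0 ≤ c := hb.trans hbc
  have htu := abs_le.1 (abs_le_of_sq_le_sq (by nlinarith : tu ^ 2 ≤ a ^ 2) ha)
  have htv := abs_le.1 (abs_le_of_sq_le_sq (by nlinarith : tv ^ 2 ≤ b ^ 2) hb)
  have htw := abs_le.1 (abs_le_of_sq_le_sq (by nlinarith : tw ^ 2 ≤ c ^ 2) hc)
  have hc' : 0 ≤ c * (1 - ε ^ 2) := mul_nonneg hc (by nlinarith)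
  constructor
  · refine (lt_abs.1 huv).resolve_right fun h => ?_
    have hdc : d ≤ c := (le_abs_self d).trans (abs_le_of_sq_le_sq (by nlinarith) hc)
    have hν2 : d ^ 2 - 2 * (c * (ε * c)) ≤ ν ^ 2 := by
      rcases le_total δ d with h | h
      · nlinarith only [pow_le_pow_left₀ (sub_nonneg.2 h) (by linarith : d - δ ≤ ν) 2,
          sq_nonneg δ, mul_le_mul hdc hδc hδ hc]
      · nlinarith only [mul_nonneg hd (by linarith : 0 ≤ 2 * δ - d), sq_nonneg ν,
          mul_le_mul hdc hδc hδ hc]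
    have htv2 : tv ^ 2 ≤ (ε ^ 2 * c) ^ 2 := sq_le_sq' (by linarith) (by linarith)
    have htu2 : (c * (1 - ε ^ 2)) ^ 2 < tu ^ 2 := by
      simpa [neg_sq] using pow_lt_pow_left₀ (by linarith : c * (1 - ε ^ 2) < -tu) hc' two_ne_zero
    nlinarith only [ha2, hb2, pow_le_pow_left₀ ha hab 2, htv2, htu2, hν2,
      mul_nonneg (sq_nonneg c) (by nlinarith only [hε, hε1] : 0 ≤ 1 - 2 * ε ^ 2 - 2 * ε)]
  · rw [← neg_sub tu tw]
    refine (lt_abs.1 huw).resolve_left fun h => ?_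
    have htw2 : tw ^ 2 ≤ (ε ^ 2 * c) ^ 2 := sq_le_sq' (by linarith) (by linarith)
    have htv2 : (c * (1 - ε ^ 2)) ^ 2 < tv ^ 2 := by
      simpa [neg_sq] using pow_lt_pow_left₀ (by linarith : c * (1 - ε ^ 2) < -tv) hc' two_ne_zero
    nlinarith only [hb2, hc2, pow_le_pow_left₀ hb hbc 2, htw2, htv2,
      mul_nonneg (sq_nonneg c) (by nlinarith only [hε, hε1] : 0 ≤ 1 - 2 * ε ^ 2)]

lemma needle_of_small_area_coords {ε c a b tu tv tw d ν δ : ℝ} (hε : 0 ≤ ε) (hε1 : ε ≤ 1 / 10)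
    (ha : 0 ≤ a) (hab : a ≤ b) (hbc : b ≤ c) (hd : 0 ≤ d) (hν : 0 ≤ ν) (hδ : 0 ≤ δ)
    (ha2 : a ^ 2 = tu ^ 2 + ν ^ 2) (hb2 : b ^ 2 = tv ^ 2 + d ^ 2) (hc2 : c ^ 2 = tw ^ 2 + d ^ 2)
    (huv : c ^ 2 < (tu - tv) ^ 2 + δ ^ 2) (huw : c ^ 2 < (tu - tw) ^ 2 + δ ^ 2)
    (hvw : c < tw - tv) (harea : δ * (tw - tv) ≤ ε * c ^ 2) (hνd : d ≤ ν + δ) (hdν : ν ≤ d + δ) :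
    a ≤ 4 * ε * c ∧ c * (1 - 2 * ε ^ 2) ≤ b ∧ tv * tw + d ^ 2 ≤ -(1 - 8 * ε ^ 2) * c ^ 2 := by
  have htu := abs_le.1 (abs_le_of_sq_le_sq (by nlinarith : tu ^ 2 ≤ a ^ 2) ha)
  have htv := abs_le.1 (abs_le_of_sq_le_sq (by nlinarith : tv ^ 2 ≤ b ^ 2) (ha.trans hab))
  have htw := abs_le.1 (abs_le_of_sq_le_sq (by nlinarith : tw ^ 2 ≤ c ^ 2)
    (ha.trans (hab.trans hbc)))
  have hc : 0 < c := by linarith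
  obtain ⟨hδc, hUV, hUW⟩ := lt_abs_sub_of_area_le hε hε1 hc hδ huv huw hvw harea
  obtain ⟨hUV, hUW⟩ := lt_sub_of_area_le hε hε1 ha hab hbc hd hδ ha2 hb2 hc2 hvw hδc hνd hUV hUW
  set k := c * (1 - 2 * ε ^ 2) with hk
  have hk0 : 0 < k := mul_pos hc (by nlinarith)
  have htu2 : tu ^ 2 ≤ (ε ^ 2 * c) ^ 2 := sq_le_sq' (by linarith) (by linarith)
  have htvk : tv < -k := by linarith
  have htwk : k < tw := by linarith
  have hd2 : d ^ 2 ≤ c ^ 2 - k ^ 2 := by nlinarith only [hc2, pow_le_pow_left₀ hk0.le htwk.le 2]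
  have hd2ε : d ≤ 2 * ε * c := by
    refine le_of_pow_le_pow_left₀ two_ne_zero (by positivity) ?_
    nlinarith only [hd2, hk, mul_nonneg (sq_nonneg c) (pow_nonneg hε 4)]
  refine ⟨?_, by linarith, ?_⟩
  · refine le_of_pow_le_pow_left₀ two_ne_zero (by positivity) ?_
    nlinarith only [ha2, htu2, pow_le_pow_left₀ hν (by linarith : ν ≤ 3 * ε * c) 2,
      mul_nonneg (mul_nonneg (sq_nonneg c) (sq_nonneg ε)) (by nlinarith : 0 ≤ 1 - ε ^ 2)]
  · nlinarith only [hd2, hk, mul_lt_mul_of_pos_left htwk hk0,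
      mul_lt_mul_of_pos_right htvk (hk0.trans htwk), mul_nonneg (sq_nonneg c) (pow_nonneg hε 4)]

variable {V : Type*} [NormedAddCommGroup V] [InnerProductSpace ℝ V]

lemma inner_eq_inner_mul_inner_add_inner_sub_smul {e : V} (he : ‖e‖ = 1) (x y : V) :
    ⟪x, y⟫ = ⟪x, e⟫ * ⟪y, e⟫ + ⟪x - ⟪x, e⟫ • e, y - ⟪y, e⟫ • e⟫ := by
  simp only [inner_sub_left, inner_sub_right, real_inner_smul_left, real_inner_smul_right,
    real_inner_self_eq_norm_sq, he, real_inner_comm e]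
  ring

lemma norm_sq_eq_inner_sq_add_norm_sub_smul_sq {e : V} (he : ‖e‖ = 1) (x : V) :
    ‖x‖ ^ 2 = ⟪x, e⟫ ^ 2 + ‖x - ⟪x, e⟫ • e‖ ^ 2 := by
  rw [← real_inner_self_eq_norm_sq, ← real_inner_self_eq_norm_sq,
    inner_eq_inner_mul_inner_add_inner_sub_smul he]
  ring

lemma needle_of_small_area {u v w : V} {ε : ℝ} (hε : 0 ≤ ε) (hε1 : ε ≤ 1 / 10)
    (huv : ‖u‖ ≤ ‖v‖) (hvw : ‖v‖ ≤ ‖w‖) (duv : ‖w‖ < ‖u - v‖) (duw : ‖w‖ < ‖u - w‖)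
    (dvw : ‖w‖ < ‖v - w‖)
    (harea : ‖u - v‖ ^ 2 * ‖w - v‖ ^ 2 - ⟪u - v, w - v⟫ ^ 2 ≤ (ε * ‖w‖ ^ 2) ^ 2) :
    ‖u‖ ≤ 4 * ε * ‖w‖ ∧ ‖w‖ * (1 - 2 * ε ^ 2) ≤ ‖v‖ ∧ ⟪v, w⟫ ≤ -(1 - 8 * ε ^ 2) * ‖w‖ ^ 2 := by
  set L := ‖w - v‖
  have hL : ‖w‖ < L := by rwa [norm_sub_rev] at dvw
  have hL0 : 0 < L := (norm_nonneg w).trans_lt hL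
  set e := L⁻¹ • (w - v)
  have he : ‖e‖ = 1 := by simp [e, norm_smul, hL0.ne', L]
  have hwv : w - v = L • e := by simp [e, smul_smul, hL0.ne']
  set q : V → V := fun x => x - ⟪x, e⟫ • e
  have hnorm (x : V) : ‖x‖ ^ 2 = ⟪x, e⟫ ^ 2 + ‖q x‖ ^ 2 :=
    norm_sq_eq_inner_sq_add_norm_sub_smul_sq he x
  have hq_sub (x y : V) : q (x - y) = q x - q y := by simp only [q, inner_sub_left, sub_smul]; abel
  have hqw : q w = q v := by
    rw [← sub_eq_zero, ← hq_sub, hwv]; simp [q, real_inner_smul_left, he]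
  have hLe : ⟪w, e⟫ - ⟪v, e⟫ = L := by
    rw [← inner_sub_left, hwv, real_inner_smul_left, real_inner_self_eq_norm_sq, he]; ring
  have hdist (x y : V) : ‖x - y‖ ^ 2 = (⟪x, e⟫ - ⟪y, e⟫) ^ 2 + ‖q x - q y‖ ^ 2 := by
    rw [hnorm, hq_sub, inner_sub_left]
  have hgram : ‖u - v‖ ^ 2 * ‖w - v‖ ^ 2 - ⟪u - v, w - v⟫ ^ 2 = (L * ‖q u - q v‖) ^ 2 := by
    rw [hwv, norm_smul, he, real_inner_smul_right, hnorm (u - v), hq_sub,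
      Real.norm_of_nonneg hL0.le]
    ring
  have hδL : ‖q u - q v‖ * (⟪w, e⟫ - ⟪v, e⟫) ≤ ε * ‖w‖ ^ 2 := by
    rw [hLe, mul_comm]
    exact le_of_pow_le_pow_left₀ two_ne_zero (by positivity) (hgram ▸ harea)
  have hvw_inner : ⟪v, w⟫ = ⟪v, e⟫ * ⟪w, e⟫ + ‖q v‖ ^ 2 := by
    rw [inner_eq_inner_mul_inner_add_inner_sub_smul he v w, ← real_inner_self_eq_norm_sq]
    change _ + ⟪q v, q w⟫ = _ + ⟪q v, q v⟫
    rw [hqw]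
  have key := needle_of_small_area_coords hε hε1 (norm_nonneg u) huv hvw (norm_nonneg (q v))
    (norm_nonneg (q u)) (norm_nonneg (q u - q v)) (hnorm u) (hnorm v) (hqw ▸ hnorm w)
    (hdist u v ▸ pow_lt_pow_left₀ duv (norm_nonneg w) two_ne_zero)
    (hqw ▸ hdist u w ▸ pow_lt_pow_left₀ duw (norm_nonneg w) two_ne_zero) (hLe ▸ hL) hδL
    (norm_le_norm_add_norm_sub _ _) (norm_le_norm_add_norm_sub' _ _)
  exact ⟨key.1, key.2.1, hvw_inner ▸ key.2.2⟩

lemma abs_le_pi_mul_of_one_sub_le_cos {φ ε : ℝ} (hφ : |φ| ≤ π) (hε : 0 ≤ ε)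
    (h : 1 - 2 * ε ^ 2 ≤ cos φ) : |φ| ≤ π * ε := by
  have hcos := cos_le_one_sub_mul_cos_sq hφ
  have hφ2 : φ ^ 2 ≤ (π * ε) ^ 2 := by
    have : 2 / π ^ 2 * φ ^ 2 ≤ 2 * ε ^ 2 := by linarith
    rw [div_mul_eq_mul_div, div_le_iff₀ (by positivity)] at this
    nlinarith
  exact abs_le_of_sq_le_sq hφ2 (by positivity)

lemma pi_sub_angle_le_of_inner_le {v w : V} {ε : ℝ} (hε : 0 ≤ ε) (hε1 : ε ≤ 1 / 10)
    (hv : 0 < ‖v‖) (hvw : ‖v‖ ≤ ‖w‖) (h : ⟪v, w⟫ ≤ -(1 - 8 * ε ^ 2) * ‖w‖ ^ 2) :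
    π - angle v w ≤ 2 * π * ε := by
  have hw : 0 < ‖w‖ := hv.trans_le hvw
  have hcos : 1 - 2 * (2 * ε) ^ 2 ≤ cos (angle v (-w)) := by
    rw [cos_angle, inner_neg_right, norm_neg, le_div_iff₀ (by positivity)]
    have h8 : 0 ≤ 1 - 8 * ε ^ 2 := by nlinarith
    nlinarith [mul_le_mul_of_nonneg_left hvw (mul_nonneg hw.le h8)]
  have := abs_le_pi_mul_of_one_sub_le_cos
    (by rw [abs_of_nonneg (angle_nonneg _ _)]; exact angle_le_pi _ _) (by positivity) hcos
  rw [abs_of_nonneg (angle_nonneg _ _), angle_neg_right] at this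
  linarith

lemma norm_div_norm_add_pi_sub_angle_le {u v w : V} {ε : ℝ} (hε : 0 ≤ ε) (hε1 : ε ≤ 1 / 10)
    (huv : ‖u‖ ≤ ‖v‖) (hvw : ‖v‖ ≤ ‖w‖) (duv : ‖w‖ < ‖u - v‖) (duw : ‖w‖ < ‖u - w‖)
    (dvw : ‖w‖ < ‖v - w‖)
    (harea : ‖u - v‖ ^ 2 * ‖w - v‖ ^ 2 - ⟪u - v, w - v⟫ ^ 2 ≤ (ε * ‖w‖ ^ 2) ^ 2) :
    ‖u‖ / ‖v‖ + (π - angle v w) ≤ 12 * ε := by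
  obtain ⟨hu, hv, hinner⟩ := needle_of_small_area hε hε1 huv hvw duv duw dvw harea
  have hw : 0 < ‖w‖ := by linarith [norm_sub_le u v]
  have hv0 : 0 < ‖v‖ := lt_of_lt_of_le (mul_pos hw (by nlinarith)) hv
  have hratio : ‖u‖ / ‖v‖ ≤ 5 * ε := by
    rw [div_le_iff₀ hv0]
    nlinarith [mul_le_mul_of_nonneg_left hv (by positivity : (0:ℝ) ≤ 5 * ε)]
  have hangle := pi_sub_angle_le_of_inner_le hε hε1 hv0 hvw hinner
  nlinarith [pi_lt_d2]

end Needle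

section InRadius

lemma Convex.smul_add_smul_mem_of_abs_add_abs_le {E : Type*} [AddCommGroup E] [Module ℝ E]
    {C : Set E} (hC : Convex ℝ C) (h0 : (0 : E) ∈ C) {x y : E} (hx : x ∈ C) (hnx : -x ∈ C)
    (hy : y ∈ C) (hny : -y ∈ C) {α β : ℝ} (h : |α| + |β| ≤ 1) : α • x + β • y ∈ C := by
  have hsign {z : E} (γ : ℝ) (hz : z ∈ C) (hnz : -z ∈ C) : ∃ z' ∈ C, γ • z = |γ| • z' := by
    rcases le_total 0 γ with hγ | hγ
    · exact ⟨z, hz, by rw [abs_of_nonneg hγ]⟩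
    · exact ⟨-z, hnz, by rw [abs_of_nonpos hγ, neg_smul, smul_neg, neg_neg]⟩
  obtain ⟨x', hx', hxx⟩ := hsign α hx hnx
  obtain ⟨y', hy', hyy⟩ := hsign β hy hny
  obtain ⟨z, hz, hzz⟩ := hC.exists_mem_add_smul_eq hx' hy' (abs_nonneg α) (abs_nonneg β)
  rw [hxx, hyy, ← hzz]
  exact hC.smul_mem_of_zero_mem h0 hz ⟨by positivity, h⟩

lemma inner_projPl_self (Y h : E3) : ⟪projPl Y h, Y⟫ = 0 := by
  rcases eq_or_ne Y 0 with rfl | hY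
  · simp
  · have : ‖Y‖ ≠ 0 := norm_ne_zero_iff.2 hY
    simp only [projPl, projL, inner_sub_left, real_inner_smul_left, real_inner_self_eq_norm_sq]
    field_simp
    ring

variable (Y : E3) (g : Fin 3 → Fin 3 → ℤ)

lemma colP_mem_hexHull (i : Fin 3) : colP Y g i ∈ hexHull Y g :=
  subset_convexHull ℝ _ (by fin_cases i <;> simp)

lemma neg_colP_mem_hexHull (i : Fin 3) : -colP Y g i ∈ hexHull Y g :=
  subset_convexHull ℝ _ (by fin_cases i <;> simp)

lemma zero_mem_hexHull : (0 : E3) ∈ hexHull Y g := by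
  simpa [hexHull] using (convex_convexHull ℝ _).midpoint_mem (colP_mem_hexHull Y g 0)
    (neg_colP_mem_hexHull Y g 0)

lemma smul_add_smul_mem_hexHull (i j : Fin 3) {α β : ℝ} (h : |α| + |β| ≤ 1) :
    α • colP Y g i + β • colP Y g j ∈ hexHull Y g :=
  (convex_convexHull ℝ _).smul_add_smul_mem_of_abs_add_abs_le (zero_mem_hexHull Y g)
    (colP_mem_hexHull Y g i) (neg_colP_mem_hexHull Y g i) (colP_mem_hexHull Y g j)
    (neg_colP_mem_hexHull Y g j) h

lemma inner_le_of_mem_hexHull {n : E3} {M : ℝ} (hM : ∀ i, |⟪colP Y g i, n⟫| ≤ M) {z : E3}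
    (hz : z ∈ hexHull Y g) : ⟪z, n⟫ ≤ M := by
  have hlin : IsLinearMap ℝ (⟪·, n⟫) :=
    ⟨fun x y => inner_add_left x y n, fun c x => real_inner_smul_left x n c⟩
  refine convexHull_min ?_ (convex_halfSpace_le hlin M) hz
  rintro _ (rfl | rfl | rfl | rfl | rfl | rfl)
  all_goals first
    | exact (le_abs_self _).trans (hM _)
    | exact (inner_neg_left (𝕜 := ℝ) (colP Y g _) n ▸ neg_le_abs _).trans (hM _)

def inscribedRadii : Set ℝ :=
  {r : ℝ | 0 ≤ r ∧ {y : E3 | (inner ℝ y Y : ℝ) = 0 ∧ ‖y‖ ≤ r} ⊆ hexHull Y g}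

lemma inRadius_eq_sSup : inRadius Y g = sSup (inscribedRadii Y g) := rfl

lemma zero_mem_inscribedRadii : (0 : ℝ) ∈ inscribedRadii Y g := by
  refine ⟨le_rfl, fun y hy => ?_⟩
  rw [norm_le_zero_iff.1 hy.2]
  exact zero_mem_hexHull Y g

variable {Y g}

lemma mem_upperBounds_inscribedRadii {n : E3} (hn : n ≠ 0) (hnY : ⟪n, Y⟫ = 0) {M : ℝ}
    (hM : ∀ i, |⟪colP Y g i, n⟫| ≤ M * ‖n‖) : M ∈ upperBounds (inscribedRadii Y g) := by
  rintro r ⟨hr, hdisk⟩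
  have hn0 : 0 < ‖n‖ := norm_pos_iff.2 hn
  have hy : (r / ‖n‖) • n ∈ hexHull Y g := by
    refine hdisk ⟨by rw [real_inner_smul_left, hnY, mul_zero], ?_⟩
    rw [norm_smul, Real.norm_of_nonneg (by positivity), div_mul_cancel₀ _ hn0.ne']
  have := inner_le_of_mem_hexHull Y g hM hy
  rw [real_inner_smul_left, real_inner_self_eq_norm_sq, div_mul_eq_mul_div, sq,
    mul_div_assoc, mul_div_cancel_left₀ _ hn0.ne'] at this
  exact le_of_mul_le_mul_right this hn0

lemma inRadius_le {n : E3} (hn : n ≠ 0) (hnY : ⟪n, Y⟫ = 0) {M : ℝ}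
    (hM : ∀ i, |⟪colP Y g i, n⟫| ≤ M * ‖n‖) : inRadius Y g ≤ M :=
  csSup_le ⟨0, zero_mem_inscribedRadii Y g⟩ (mem_upperBounds_inscribedRadii hn hnY hM)

lemma bddAbove_inscribedRadii (hY : Y ≠ 0) {k : Fin 3} (hk : colP Y g k ≠ 0)
    (hmax : ∀ i, ‖colP Y g i‖ ≤ ‖colP Y g k‖) : BddAbove (inscribedRadii Y g) := by
  refine ⟨_, mem_upperBounds_inscribedRadii
    (cross3_ne_zero_of_inner_eq_zero hY hk (inner_projPl_self _ _)) (inner_cross3_left _ _) fun i =>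
    (abs_real_inner_le_norm _ _).trans (mul_le_mul_of_nonneg_right (hmax i) (norm_nonneg _))⟩

lemma inRadius_le_norm_add_mul_sin (hY : Y ≠ 0) (τ : Equiv.Perm (Fin 3))
    (h12 : ‖colP Y g (τ 1)‖ ≤ ‖colP Y g (τ 2)‖)
    (hw : colP Y g (τ 2) ≠ 0) :
    inRadius Y g ≤ ‖colP Y g (τ 0)‖ +
      ‖colP Y g (τ 2)‖ * sin (angle (colP Y g (τ 1)) (colP Y g (τ 2))) := by
  set u := colP Y g (τ 0)
  set v := colP Y g (τ 1)
  set w := colP Y g (τ 2)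
  have hwY : ⟪w, Y⟫ = 0 := inner_projPl_self _ _
  have hnorm := norm_cross3_of_inner_eq_zero hwY
  have hsin : 0 ≤ sin (angle v w) := sin_angle_nonneg v w
  have hu : |⟪u, cross3 Y w⟫| ≤ (‖u‖ + ‖w‖ * sin (angle v w)) * ‖cross3 Y w‖ :=
    (abs_real_inner_le_norm _ _).trans
      (mul_le_mul_of_nonneg_right (le_add_of_nonneg_right (by positivity)) (norm_nonneg _))
  have hv : |⟪v, cross3 Y w⟫| ≤ (‖u‖ + ‖w‖ * sin (angle v w)) * ‖cross3 Y w‖ :=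
    calc |⟪v, cross3 Y w⟫| = |⟪Y, cross3 w v⟫| := by rw [inner_cross3_cycle]
      _ ≤ ‖Y‖ * (‖w‖ * ‖v‖ * sin (angle v w)) := by
        rw [← angle_comm, ← norm_cross3]; exact abs_real_inner_le_norm _ _
      _ ≤ ‖Y‖ * (‖w‖ * ‖w‖ * sin (angle v w)) := by gcongr
      _ ≤ (‖u‖ + ‖w‖ * sin (angle v w)) * ‖cross3 Y w‖ := by
        rw [hnorm]
        nlinarith [mul_nonneg (mul_nonneg (norm_nonneg u) (norm_nonneg Y)) (norm_nonneg w)]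
  have hw' : |⟪w, cross3 Y w⟫| ≤ (‖u‖ + ‖w‖ * sin (angle v w)) * ‖cross3 Y w‖ := by
    rw [real_inner_comm, inner_cross3_right, abs_zero]; positivity
  refine inRadius_le (cross3_ne_zero_of_inner_eq_zero hY hw hwY) (inner_cross3_left _ _)
    fun i => ?_
  obtain ⟨k, rfl⟩ := τ.surjective i
  fin_cases k
  exacts [hu, hv, hw']

lemma abs_mul_sub_mul_le {a b c d A B C D : ℝ} (ha : |a| ≤ A) (hb : |b| ≤ B) (hc : |c| ≤ C)
    (hd : |d| ≤ D) : |a * b - c * d| ≤ A * B + C * D :=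
  calc |a * b - c * d| ≤ |a| * |b| + |c| * |d| := by rw [← abs_mul, ← abs_mul]; exact abs_sub _ _
    _ ≤ A * B + C * D := by
      gcongr
      exacts [(abs_nonneg a).trans ha, (abs_nonneg c).trans hc]

lemma norm_cross3_sq_div_mem_inscribedRadii (hY : Y ≠ 0) {c : ℝ} (hc : 0 < c)
    (hmax : ∀ i, ‖colP Y g i‖ ≤ c) (i j : Fin 3) :
    ‖cross3 (colP Y g i) (colP Y g j)‖ ^ 2 / (4 * c ^ 3) ∈ inscribedRadii Y g := by
  set x := colP Y g i
  set y := colP Y g j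
  set D := ‖cross3 x y‖ ^ 2
  refine ⟨by positivity, fun z ⟨hzY, hz⟩ => ?_⟩
  rcases eq_or_lt_of_le (show 0 ≤ D by positivity) with hD | hD
  · rw [← hD, zero_div, norm_le_zero_iff] at hz
    rw [hz]; exact zero_mem_hexHull Y g
  have hcoplanar : ⟪z, cross3 x y⟫ = 0 :=
    inner_cross3_eq_zero_of_orthogonal hY (inner_projPl_self _ _) (inner_projPl_self _ _) hzY
  have hdec : D • z = (⟪z, x⟫ * ‖y‖ ^ 2 - ⟪z, y⟫ * ⟪x, y⟫) • x
      + (⟪z, y⟫ * ‖x‖ ^ 2 - ⟪z, x⟫ * ⟪x, y⟫) • y := by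
    rw [norm_cross3_sq_smul x y z, hcoplanar, zero_smul, zero_add]
  rw [← eq_inv_smul_iff₀ hD.ne', smul_add, smul_smul, smul_smul, ← div_eq_inv_mul,
    ← div_eq_inv_mul] at hdec
  rw [hdec]
  have hinner {a b : E3} {A B : ℝ} (ha : ‖a‖ ≤ A) (hb : ‖b‖ ≤ B) : |⟪a, b⟫| ≤ A * B :=
    (abs_real_inner_le_norm a b).trans (mul_le_mul ha hb (norm_nonneg b) ((norm_nonneg a).trans ha))
  have hsq {a : E3} (ha : ‖a‖ ≤ c) : |‖a‖ ^ 2| ≤ c * c := by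
    rw [abs_of_nonneg (sq_nonneg _), sq]; exact mul_le_mul ha ha (norm_nonneg a) hc.le
  have hcoef {N : ℝ}
      (hN : |N| ≤ D / (4 * c ^ 3) * c * (c * c) + D / (4 * c ^ 3) * c * (c * c)) :
      |N / D| ≤ 1 / 2 := by
    have hr : D / (4 * c ^ 3) * c * (c * c) + D / (4 * c ^ 3) * c * (c * c) = 1 / 2 * D := by
      field_simp; ring
    rw [abs_div, abs_of_pos hD, div_le_iff₀ hD]
    linarith
  have hα := hcoef (abs_mul_sub_mul_le (hinner hz (hmax i)) (hsq (hmax j)) (hinner hz (hmax j))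
    (hinner (hmax i) (hmax j)))
  have hβ := hcoef (abs_mul_sub_mul_le (hinner hz (hmax j)) (hsq (hmax i)) (hinner hz (hmax i))
    (hinner (hmax i) (hmax j)))
  exact smul_add_smul_mem_hexHull Y g i j (by linarith)

lemma norm_cross3_sq_le_inRadius (hY : Y ≠ 0) {k : Fin 3} (hk : colP Y g k ≠ 0)
    (hmax : ∀ i, ‖colP Y g i‖ ≤ ‖colP Y g k‖) (i j : Fin 3) :
    ‖cross3 (colP Y g i) (colP Y g j)‖ ^ 2 ≤ 4 * ‖colP Y g k‖ ^ 3 * inRadius Y g := by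
  have hc : 0 < ‖colP Y g k‖ := norm_pos_iff.2 hk
  have := le_csSup (bddAbove_inscribedRadii hY hk hmax)
    (norm_cross3_sq_div_mem_inscribedRadii hY hc hmax i j)
  rwa [← inRadius_eq_sSup, div_le_iff₀ (by positivity), mul_comm] at this

end InRadius

section SVAStep

lemma toR3_sub (a b : Fin 3 → ℤ) : toR3 (a - b) = toR3 a - toR3 b := by
  ext i; simp [toR3, toE3]

lemma projPl_sub (X x y : E3) : projPl X (x - y) = projPl X x - projPl X y := by
  simp only [projPl, projL, inner_sub_left, sub_div, sub_smul]; abel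

variable {X : E3} {g g' : Fin 3 → Fin 3 → ℤ}

lemma SVAStep.colP_eq_or_norm_eq_min3 (h : SVAStep X g g') (j : Fin 3) :
    (∃ i, colP X g' j = colP X g i) ∨ ‖colP X g' j‖ =
      min3 ![‖colP X g 1 - colP X g 0‖, ‖colP X g 2 - colP X g 1‖, ‖colP X g 2 - colP X g 0‖] := by
  obtain ⟨f, hf, τ, hτ, -⟩ := h
  have hcol : colP X g' j = colP X f (τ j) := by simp only [colP, hτ j]
  rw [hcol]
  generalize τ j = k
  rcases hf with ⟨hmin, rfl⟩ | ⟨hmin, rfl⟩ | ⟨hmin, rfl⟩ <;> fin_cases k <;>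
  first
    | exact Or.inl ⟨0, rfl⟩
    | exact Or.inl ⟨1, rfl⟩
    | exact Or.inl ⟨2, rfl⟩
    | exact Or.inr (by simpa [colP, toR3_sub, projPl_sub] using hmin.symm)

lemma SVAStep.pairwise_lt_norm_sub (h : SVAStep X g g') {c : ℝ} (hc : ∀ i, ‖colP X g i‖ ≤ c)
    {j : Fin 3} (hj : c < ‖colP X g' j‖) : Pairwise fun a b => c < ‖colP X g a - colP X g b‖ := by
  rcases h.colP_eq_or_norm_eq_min3 j with ⟨i, hi⟩ | hmin
  · exact absurd (hi ▸ hj) (hc i).not_gt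
  simp only [hmin, min3, Matrix.cons_val_zero, Matrix.cons_val_one, Matrix.cons_val_two,
    Matrix.head_cons, Matrix.tail_cons, lt_min_iff] at hj
  obtain ⟨h10, h21, h20⟩ := hj
  intro a b hab
  fin_cases a <;> fin_cases b <;> first | exact absurd rfl hab | assumption | rwa [norm_sub_rev]

end SVAStep

section Bounds

lemma apply_le_apply_perm_two {α : Type*} [Preorder α] {f : Fin 3 → α} (τ : Equiv.Perm (Fin 3))
    (h01 : f (τ 0) ≤ f (τ 1)) (h12 : f (τ 1) ≤ f (τ 2)) (i : Fin 3) : f i ≤ f (τ 2) := by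
  obtain ⟨k, rfl⟩ := τ.surjective i
  fin_cases k
  exacts [h01.trans h12, h12, le_rfl]

lemma pos_of_pairwise_lt_norm_sub {E : Type*} [SeminormedAddGroup E] {p : Fin 3 → E} {c : ℝ}
    (hc : ∀ i, ‖p i‖ ≤ c) (hfar : Pairwise fun a b => c < ‖p a - p b‖) : 0 < c := by
  linarith [hfar (show (0 : Fin 3) ≠ 1 by decide), norm_sub_le (p 0) (p 1), hc 0, hc 1]

lemma norm_div_norm_add_pi_sub_angle_le_twiceArea {p : Fin 3 → E3} (τ : Equiv.Perm (Fin 3))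
    (h01 : ‖p (τ 0)‖ ≤ ‖p (τ 1)‖) (h12 : ‖p (τ 1)‖ ≤ ‖p (τ 2)‖)
    (hfar : Pairwise fun a b => ‖p (τ 2)‖ < ‖p a - p b‖)
    (hA : twiceArea (p 0) (p 1) (p 2) / ‖p (τ 2)‖ ^ 2 ≤ 1 / 10) :
    ‖p (τ 0)‖ / ‖p (τ 1)‖ + (π - angle (p (τ 1)) (p (τ 2))) ≤
      12 * (twiceArea (p 0) (p 1) (p 2) / ‖p (τ 2)‖ ^ 2) := by
  have hc := pos_of_pairwise_lt_norm_sub (apply_le_apply_perm_two (f := (‖p ·‖)) τ h01 h12) hfar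
  have hfar' {a b : Fin 3} (hab : a ≠ b) := hfar (τ.injective.ne hab)
  refine norm_div_norm_add_pi_sub_angle_le (div_nonneg (norm_nonneg _) (sq_nonneg _)) hA h01 h12
    (hfar' (by decide)) (hfar' (by decide)) (hfar' (by decide)) ?_
  rw [← twiceArea_sq, twiceArea_comp_perm, div_mul_cancel₀ _ (by positivity)]

variable {Y : E3} {g : Fin 3 → Fin 3 → ℤ}

lemma inRadius_nonneg : 0 ≤ inRadius Y g :=
  Real.sSup_nonneg fun _ hr => hr.1

lemma inRadius_div_le (hY : Y ≠ 0) (τ : Equiv.Perm (Fin 3))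
    (h01 : ‖colP Y g (τ 0)‖ ≤ ‖colP Y g (τ 1)‖) (h12 : ‖colP Y g (τ 1)‖ ≤ ‖colP Y g (τ 2)‖)
    (hw : 0 < ‖colP Y g (τ 2)‖) :
    inRadius Y g / ‖colP Y g (τ 2)‖ ≤ ‖colP Y g (τ 0)‖ / ‖colP Y g (τ 1)‖ +
      (π - angle (colP Y g (τ 1)) (colP Y g (τ 2))) := by
  have hρ := inRadius_le_norm_add_mul_sin hY τ h12 (norm_pos_iff.1 hw)
  set u := colP Y g (τ 0)
  set v := colP Y g (τ 1)
  set w := colP Y g (τ 2)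
  have hu : ‖u‖ ≤ ‖u‖ / ‖v‖ * ‖w‖ := by
    rcases eq_or_lt_of_le (norm_nonneg v) with hv | hv
    · rw [le_antisymm (hv ▸ h01) (norm_nonneg u)]; simp
    · rw [div_mul_eq_mul_div, le_div_iff₀ hv]; exact mul_le_mul_of_nonneg_left h12 (norm_nonneg u)
  have hsin : sin (angle v w) ≤ π - angle v w := by
    rw [← sin_pi_sub]; exact sin_le (sub_nonneg.2 (angle_le_pi v w))
  rw [div_le_iff₀ hw]
  nlinarith [mul_le_mul_of_nonneg_left hsin hw.le]

lemma twiceArea_div_sq_le (hY : Y ≠ 0) {k : Fin 3} (hk : colP Y g k ≠ 0)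
    (hmax : ∀ i, ‖colP Y g i‖ ≤ ‖colP Y g k‖) :
    twiceArea (colP Y g 0) (colP Y g 1) (colP Y g 2) / ‖colP Y g k‖ ^ 2 ≤
      6 * √(inRadius Y g / ‖colP Y g k‖) := by
  set c := ‖colP Y g k‖
  have hc : 0 < c := norm_pos_iff.2 hk
  have hcross (i j : Fin 3) :
      ‖cross3 (colP Y g i) (colP Y g j)‖ ≤ 2 * c ^ 2 * √(inRadius Y g / c) := by
    refine le_of_pow_le_pow_left₀ two_ne_zero (by positivity) ?_
    rw [mul_pow, Real.sq_sqrt (div_nonneg inRadius_nonneg hc.le)]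
    calc _ ≤ 4 * c ^ 3 * inRadius Y g := norm_cross3_sq_le_inRadius hY hk hmax i j
      _ = _ := by field_simp; ring
  rw [div_le_iff₀ (by positivity)]
  calc twiceArea (colP Y g 0) (colP Y g 1) (colP Y g 2)
      ≤ ‖cross3 (colP Y g 0) (colP Y g 1)‖ + ‖cross3 (colP Y g 1) (colP Y g 2)‖
        + ‖cross3 (colP Y g 2) (colP Y g 0)‖ := norm_add₃_le
    _ ≤ _ := by linarith [hcross 0 1, hcross 1 2, hcross 2 0]

end Bounds

theorem sva_needling_triangles_general (Y : E3) (h0 : 0 < Y 0)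
    (g : ℕ → Fin 3 → Fin 3 → ℤ) (hg : IsSVARun Y g)
    (σ : ℕ → Equiv.Perm (Fin 3))
    (hσ : ∀ s, ‖colP Y (g s) (σ s 0)‖ ≤ ‖colP Y (g s) (σ s 1)‖ ∧
               ‖colP Y (g s) (σ s 1)‖ ≤ ‖colP Y (g s) (σ s 2)‖)
    (T : Set ℕ) (hT : T = {s | ‖colP Y (g s) (σ s 2)‖ < ‖colP Y (g (s + 1)) (σ (s + 1) 2)‖}) :
    List.TFAE
      [ -- a)
        Filter.Tendsto
          (fun s => twiceArea (colP Y (g s) 0) (colP Y (g s) 1) (colP Y (g s) 2)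
            / ‖colP Y (g s) (σ s 2)‖ ^ 2)
          (Filter.atTop ⊓ Filter.principal T) (nhds 0),
        -- b)
        Filter.Tendsto (fun s => inRadius Y (g s) / ‖colP Y (g s) (σ s 2)‖)
          (Filter.atTop ⊓ Filter.principal T) (nhds 0),
        -- c)
        Filter.Tendsto
          (fun s => ‖colP Y (g s) (σ s 0)‖ / ‖colP Y (g s) (σ s 1)‖ +
            (Real.pi - InnerProductGeometry.angle (colP Y (g s) (σ s 1)) (colP Y (g s) (σ s 2))))
          (Filter.atTop ⊓ Filter.principal T) (nhds 0) ] := by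
  have hY : Y ≠ 0 := fun h => h0.ne' (by simp [h])
  have hmax (s : ℕ) := apply_le_apply_perm_two (f := (‖colP Y (g s) ·‖)) (σ s) (hσ s).1 (hσ s).2
  have hfar : ∀ᶠ s in atTop ⊓ 𝓟 T,
      Pairwise fun a b => ‖colP Y (g s) (σ s 2)‖ < ‖colP Y (g s) a - colP Y (g s) b‖ :=
    mem_inf_of_right <| mem_principal.2 fun s hs => (hg.2 s).pairwise_lt_norm_sub (hmax s) (hT ▸ hs)
  tfae_have 1 → 3 := fun h => by
    refine squeeze_zero' (.of_forall fun s => ?_) ?_ (by simpa using h.const_mul 12)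
    · exact add_nonneg (by positivity) (sub_nonneg.2 (angle_le_pi _ _))
    filter_upwards [hfar, h.eventually (eventually_le_nhds (by norm_num : (0 : ℝ) < 1 / 10))]
      with s hs hA
    exact norm_div_norm_add_pi_sub_angle_le_twiceArea (σ s) (hσ s).1 (hσ s).2 hs hA
  tfae_have 3 → 2 := fun h => by
    refine squeeze_zero' (.of_forall fun s => div_nonneg inRadius_nonneg (norm_nonneg _)) ?_ h
    filter_upwards [hfar] with s hs
    exact inRadius_div_le hY (σ s) (hσ s).1 (hσ s).2 (pos_of_pairwise_lt_norm_sub (hmax s) hs)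
  tfae_have 2 → 1 := fun h => by
    have hsqrt : Tendsto (fun t : ℝ => 6 * √t) (𝓝 0) (𝓝 0) := by
      simpa using (Real.continuous_sqrt.tendsto 0).const_mul 6
    refine squeeze_zero' (.of_forall fun s => div_nonneg (norm_nonneg _) (sq_nonneg _)) ?_
      (hsqrt.comp h)
    filter_upwards [hfar] with s hs
    exact twiceArea_div_sq_le hY (norm_pos_iff.1 (pos_of_pairwise_lt_norm_sub (hmax s) hs)) (hmax s)
  tfae_finish

/-- Lemma: needling triangles. -/
theorem sva_needling_triangles (Y : E3) (h0 : 0 < Y 0) (h01 : Y 0 < Y 1) (h12 : Y 1 < Y 2)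
    (hind : LinearIndependent ℚ fun i : Fin 3 => Y i)
    (g : ℕ → Fin 3 → Fin 3 → ℤ) (hg : IsSVARun Y g)
    (σ : ℕ → Equiv.Perm (Fin 3))
    (hσ : ∀ s, ‖colP Y (g s) (σ s 0)‖ ≤ ‖colP Y (g s) (σ s 1)‖ ∧
               ‖colP Y (g s) (σ s 1)‖ ≤ ‖colP Y (g s) (σ s 2)‖)
    (T : Set ℕ) (hT : T = {s | ‖colP Y (g s) (σ s 2)‖ < ‖colP Y (g (s + 1)) (σ (s + 1) 2)‖}) :
    List.TFAE
      [ -- a)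
        Filter.Tendsto
          (fun s => twiceArea (colP Y (g s) 0) (colP Y (g s) 1) (colP Y (g s) 2)
            / ‖colP Y (g s) (σ s 2)‖ ^ 2)
          (Filter.atTop ⊓ Filter.principal T) (nhds 0),
        -- b)
        Filter.Tendsto (fun s => inRadius Y (g s) / ‖colP Y (g s) (σ s 2)‖)
          (Filter.atTop ⊓ Filter.principal T) (nhds 0),
        -- c)
        Filter.Tendsto
          (fun s => ‖colP Y (g s) (σ s 0)‖ / ‖colP Y (g s) (σ s 1)‖ +
            (Real.pi - InnerProductGeometry.angle (colP Y (g s) (σ s 1)) (colP Y (g s) (σ s 2))))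
          (Filter.atTop ⊓ Filter.principal T) (nhds 0) ] :=
  sva_needling_triangles_general Y h0 g hg σ hσ T hT
end
end

section
/- Let X ∈ ℝ³ have coordinates linearly independent over ℚ, and let (P⁽ˢ⁾)_{s∈ℕ} be a sequence of 3×3 integer matrices all having the same determinant up to sign: det(P⁽ˢ⁾) = ε⁽ˢ⁾·D with D > 0 and ε⁽ˢ⁾ ∈ {−1, 1}. Let (P⁽ˢ⁾)* denote the polar matrix of P⁽ˢ⁾ (the transpose of its inverse). If the columns of the matrices P⁽ˢ⁾ have the max-Dirichlet property for the plane P = X^⊥, then the columns of the integer matrices D·(P⁽ˢ⁾)* have the max-Dirichlet property for the line D = ℝ·X. -/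
open Filter InnerProductGeometry Polynomial

noncomputable section

/-- The max-Dirichlet property of a sequence of triples of vectors, for the plane `X^⊥`. -/
def MaxDirichletPlane (X : E3) (p : ℕ → Fin 3 → E3) : Prop :=
  ∃ S : Set ℕ, S.Infinite ∧
    (∃ Cb : ℝ, ∀ s ∈ S,
      (max3 fun i => ‖projPl X (p s i)‖) ^ 2 * (max3 fun i => ‖projL X (p s i)‖) ≤ Cb) ∧
    Filter.Tendsto (fun s => max3 fun i => ‖projL X (p s i)‖)
      (Filter.atTop ⊓ Filter.principal S) (nhds 0)

/-- The max-Dirichlet property of a sequence of triples of vectors, for the line `ℝ·X`. -/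
def MaxDirichletLine (X : E3) (p : ℕ → Fin 3 → E3) : Prop :=
  ∃ S : Set ℕ, S.Infinite ∧
    (∃ Cb : ℝ, ∀ s ∈ S,
      (max3 fun i => ‖projPl X (p s i)‖) ^ 2 * (max3 fun i => ‖projL X (p s i)‖) ≤ Cb) ∧
    Filter.Tendsto (fun s => max3 fun i => ‖projPl X (p s i)‖)
      (Filter.atTop ⊓ Filter.principal S) (nhds 0)

/-! The rows of `D • A⁻¹` are, up to sign, the rows of the adjugate of `A`, that is, cross
products of two columns of `A`. Writing `a = a'' + a'` for the components along `X` and in `X^⊥`,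
the component of `a × b` along `X` is `a' × b'` and the one in `X^⊥` is `a'' × b' + a' × b''`.
So if `M'` and `M''` bound these components for the columns of `A`, the columns of `D • A*` have
components along `X` bounded by `M'^2` and in `X^⊥` by `2 M' M''`. Hence if `M'^2 M'' ≤ C`, the
new product is at most `(2 M' M'')^2 M'^2 ≤ 4 C^2`, and `M' M'' ≤ √(C M'')` tends to `0`. -/

open Matrix Submodule
open scoped RealInnerProductSpace

namespace E3

def cross : E3 →ₗ[ℝ] E3 →ₗ[ℝ] E3 :=
  ((crossProduct (R := ℝ)).compl₁₂ (WithLp.linearEquiv 2 ℝ (Fin 3 → ℝ)).toLinearMap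
    (WithLp.linearEquiv 2 ℝ (Fin 3 → ℝ)).toLinearMap).compr₂
      (WithLp.linearEquiv 2 ℝ (Fin 3 → ℝ)).symm.toLinearMap

lemma cross_def (u v : E3) : cross u v = WithLp.toLp 2 (u.ofLp ⨯₃ v.ofLp) := rfl

lemma inner_eq_dotProduct (u v : E3) : ⟪u, v⟫ = u.ofLp ⬝ᵥ v.ofLp := by
  rw [EuclideanSpace.inner_eq_star_dotProduct, star_trivial, dotProduct_comm]

lemma inner_cross_left (u v : E3) : ⟪cross u v, u⟫ = 0 := by
  rw [inner_eq_dotProduct, dotProduct_comm]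
  exact dot_self_cross _ _

lemma inner_cross_right (u v : E3) : ⟪cross u v, v⟫ = 0 := by
  rw [inner_eq_dotProduct, dotProduct_comm]
  exact dot_cross_self _ _

lemma cross_self (u : E3) : cross u u = 0 := by
  rw [cross_def, _root_.cross_self]
  rfl

lemma norm_cross_sq (u v : E3) : ‖cross u v‖ ^ 2 = ‖u‖ ^ 2 * ‖v‖ ^ 2 - ⟪u, v⟫ ^ 2 := by
  simp only [← real_inner_self_eq_norm_sq, inner_eq_dotProduct, cross_def,
    cross_dot_cross, dotProduct_comm v.ofLp u.ofLp]
  ring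

lemma norm_cross_le (u v : E3) : ‖cross u v‖ ≤ ‖u‖ * ‖v‖ := by
  refine le_of_sq_le_sq ?_ (by positivity)
  rw [norm_cross_sq, mul_pow]
  nlinarith [sq_nonneg ⟪u, v⟫]

lemma cross_cross_eq_smul_sub_smul (u v w : E3) :
    cross (cross u v) w = ⟪u, w⟫ • v - ⟪v, w⟫ • u := by
  rw [inner_eq_dotProduct, inner_eq_dotProduct]
  exact congrArg (WithLp.toLp 2) (_root_.cross_cross_eq_smul_sub_smul _ _ _)

lemma cross_cross_eq_smul_sub_smul' (u v w : E3) :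
    cross u (cross v w) = ⟪u, w⟫ • v - ⟪v, u⟫ • w := by
  rw [inner_eq_dotProduct, inner_eq_dotProduct]
  exact congrArg (WithLp.toLp 2) (_root_.cross_cross_eq_smul_sub_smul' _ _ _)

end E3

open E3

section Projection

variable (X : E3)

lemma projL_eq_starProjection : projL X = (ℝ ∙ X).starProjection := by
  funext h
  rw [projL, starProjection_singleton, real_inner_comm]
  rfl

lemma projPl_eq_starProjection : projPl X = (ℝ ∙ X)ᗮ.starProjection := by
  funext h
  rw [projPl, starProjection_orthogonal_val, projL_eq_starProjection]

lemma projL_add_projPl (h : E3) : projL X h + projPl X h = h := add_sub_cancel _ _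

lemma projL_mem_span (h : E3) : projL X h ∈ ℝ ∙ X := by
  rw [projL_eq_starProjection]
  exact starProjection_apply_mem _ h

lemma projPl_mem_orthogonal (h : E3) : projPl X h ∈ (ℝ ∙ X)ᗮ := by
  rw [projPl_eq_starProjection]
  exact starProjection_apply_mem _ h

lemma projL_add (h k : E3) : projL X (h + k) = projL X h + projL X k := by
  rw [projL_eq_starProjection, map_add]

lemma projL_smul (c : ℝ) (h : E3) : projL X (c • h) = c • projL X h := by
  rw [projL_eq_starProjection, map_smul]

lemma projPl_smul (c : ℝ) (h : E3) : projPl X (c • h) = c • projPl X h := by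
  rw [projPl_eq_starProjection, map_smul]

lemma projL_of_mem_span {h : E3} (hh : h ∈ ℝ ∙ X) : projL X h = h := by
  rw [projL_eq_starProjection, starProjection_eq_self_iff.mpr hh]

lemma projL_of_mem_orthogonal {h : E3} (hh : h ∈ (ℝ ∙ X)ᗮ) : projL X h = 0 := by
  rw [projL_eq_starProjection, (starProjection_apply_eq_zero_iff _).mpr hh]

lemma cross_mem_orthogonal_of_left_mem {u : E3} (hu : u ∈ ℝ ∙ X) (v : E3) :
    cross u v ∈ (ℝ ∙ X)ᗮ := by
  obtain ⟨c, rfl⟩ := mem_span_singleton.mp hu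
  rw [mem_orthogonal_singleton_iff_inner_left, map_smul, LinearMap.smul_apply,
    real_inner_smul_left, inner_cross_left, mul_zero]

lemma cross_mem_orthogonal_of_right_mem (u : E3) {v : E3} (hv : v ∈ ℝ ∙ X) :
    cross u v ∈ (ℝ ∙ X)ᗮ := by
  obtain ⟨c, rfl⟩ := mem_span_singleton.mp hv
  rw [mem_orthogonal_singleton_iff_inner_left, map_smul, real_inner_smul_left,
    inner_cross_right, mul_zero]

lemma cross_mem_span_of_mem_orthogonal (hX : X ≠ 0) {u v : E3} (hu : u ∈ (ℝ ∙ X)ᗮ)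
    (hv : v ∈ (ℝ ∙ X)ᗮ) : cross u v ∈ ℝ ∙ X := by
  rw [mem_orthogonal_singleton_iff_inner_left] at hu hv
  -- `X × ((u × v) × X) = ⟪X, X⟫ (u × v) - ⟪u × v, X⟫ X`, and `(u × v) × X = 0` as `u, v ⊥ X`
  have h := E3.cross_cross_eq_smul_sub_smul' X (cross u v) X
  rw [E3.cross_cross_eq_smul_sub_smul, hu, hv, zero_smul, zero_smul, sub_zero, map_zero, eq_comm,
    sub_eq_zero] at h
  refine mem_span_singleton.mpr ⟨⟪cross u v, X⟫ / ⟪X, X⟫, ?_⟩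
  rw [div_eq_inv_mul, mul_smul, ← h, smul_smul, inv_mul_cancel₀ (inner_self_ne_zero.mpr hX),
    one_smul]

lemma cross_projL_projL (a b : E3) : cross (projL X a) (projL X b) = 0 := by
  obtain ⟨c, hc⟩ := mem_span_singleton.mp (projL_mem_span X a)
  obtain ⟨d, hd⟩ := mem_span_singleton.mp (projL_mem_span X b)
  rw [← hc, ← hd, map_smul, map_smul, LinearMap.smul_apply, E3.cross_self, smul_zero, smul_zero]

lemma cross_eq_cross_projPl_add (a b : E3) :
    cross a b = cross (projPl X a) (projPl X b)
      + (cross (projL X a) (projPl X b) + cross (projPl X a) (projL X b)) := by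
  conv_lhs => rw [← projL_add_projPl X a, ← projL_add_projPl X b]
  simp only [map_add, LinearMap.add_apply, cross_projL_projL]
  abel

variable {X}

lemma projL_cross (hX : X ≠ 0) (a b : E3) :
    projL X (cross a b) = cross (projPl X a) (projPl X b) := by
  rw [cross_eq_cross_projPl_add X, projL_add, projL_add,
    projL_of_mem_span X (cross_mem_span_of_mem_orthogonal X hX
      (projPl_mem_orthogonal X a) (projPl_mem_orthogonal X b)),
    projL_of_mem_orthogonal X (cross_mem_orthogonal_of_left_mem X (projL_mem_span X a) _),
    projL_of_mem_orthogonal X (cross_mem_orthogonal_of_right_mem X _ (projL_mem_span X b)),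
    add_zero, add_zero]

lemma projPl_cross (hX : X ≠ 0) (a b : E3) :
    projPl X (cross a b) = cross (projL X a) (projPl X b) + cross (projPl X a) (projL X b) := by
  rw [projPl, projL_cross hX, cross_eq_cross_projPl_add X a b, add_sub_cancel_left]

lemma norm_projL_cross_le (hX : X ≠ 0) (a b : E3) :
    ‖projL X (cross a b)‖ ≤ ‖projPl X a‖ * ‖projPl X b‖ := by
  rw [projL_cross hX]
  exact norm_cross_le _ _

lemma norm_projPl_cross_le (hX : X ≠ 0) (a b : E3) :
    ‖projPl X (cross a b)‖ ≤ ‖projL X a‖ * ‖projPl X b‖ + ‖projPl X a‖ * ‖projL X b‖ := by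
  rw [projPl_cross hX]
  exact (norm_add_le _ _).trans (add_le_add (norm_cross_le _ _) (norm_cross_le _ _))

end Projection

lemma exists_adjugate_row_eq_cross {R : Type*} [CommRing R] (A : Matrix (Fin 3) (Fin 3) R)
    (i : Fin 3) : ∃ k l, A.adjugate i = Aᵀ k ⨯₃ Aᵀ l := by
  fin_cases i
  · refine ⟨1, 2, ?_⟩
    ext j; fin_cases j <;> simp [adjugate_fin_three, cross_apply] <;> ring
  · refine ⟨2, 0, ?_⟩
    ext j; fin_cases j <;> simp [adjugate_fin_three, cross_apply] <;> ring
  · refine ⟨0, 1, ?_⟩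
    ext j; fin_cases j <;> simp [adjugate_fin_three, cross_apply] <;> ring

lemma smul_inv_eq_adjugate_or_neg {n K : Type*} [Fintype n] [DecidableEq n] [Field K]
    {A : Matrix n n K} {c : K} (hc : c ≠ 0) (hdet : A.det = c ∨ A.det = -c) :
    c • A⁻¹ = A.adjugate ∨ c • A⁻¹ = -A.adjugate := by
  rw [inv_def, Ring.inverse_eq_inv, smul_smul]
  rcases hdet with h | h <;> rw [h]
  · left
    rw [mul_inv_cancel₀ hc, one_smul]
  · right
    rw [inv_neg, mul_neg, mul_inv_cancel₀ hc, neg_one_smul]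

lemma exists_smul_inv_row_eq_cross {A : Matrix (Fin 3) (Fin 3) ℝ} {c : ℝ} (hc : c ≠ 0)
    (hdet : A.det = c ∨ A.det = -c) (i : Fin 3) :
    ∃ (ε : ℝ) (k l : Fin 3), |ε| = 1 ∧
      c • toE3 (A⁻¹ i) = ε • cross (toE3 (Aᵀ k)) (toE3 (Aᵀ l)) := by
  obtain ⟨k, l, hkl⟩ := exists_adjugate_row_eq_cross A i
  have hrow : c • A⁻¹ i = A.adjugate i ∨ c • A⁻¹ i = -A.adjugate i :=
    (smul_inv_eq_adjugate_or_neg hc hdet).imp (fun h => congrFun h i) (fun h => congrFun h i)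
  rcases hrow with h | h
  · refine ⟨1, k, l, abs_one, ?_⟩
    show toE3 (c • A⁻¹ i) = 1 • toE3 (Aᵀ k ⨯₃ Aᵀ l)
    rw [h, hkl, one_smul]
  · refine ⟨-1, k, l, by simp, ?_⟩
    show toE3 (c • A⁻¹ i) = -1 • toE3 (Aᵀ k ⨯₃ Aᵀ l)
    rw [h, hkl, neg_one_smul]
    rfl

lemma le_max3 (f : Fin 3 → ℝ) (i : Fin 3) : f i ≤ max3 f := by
  fin_cases i
  · exact le_max_left _ _
  · exact (le_max_left _ _).trans (le_max_right _ _)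
  · exact (le_max_right _ _).trans (le_max_right _ _)

lemma max3_le {f : Fin 3 → ℝ} {c : ℝ} (h : ∀ i, f i ≤ c) : max3 f ≤ c :=
  max_le (h 0) (max_le (h 1) (h 2))

lemma max3_norm_nonneg (v : Fin 3 → E3) : 0 ≤ max3 fun k => ‖v k‖ :=
  (norm_nonneg (v 0)).trans (le_max3 (fun k => ‖v k‖) 0)

section Polar

variable {X : E3} {A : Matrix (Fin 3) (Fin 3) ℝ} {c : ℝ}

lemma norm_projL_smul_inv_row_le (hX : X ≠ 0) (hc : c ≠ 0) (hdet : A.det = c ∨ A.det = -c)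
    (i : Fin 3) :
    ‖projL X (c • toE3 (A⁻¹ i))‖ ≤ (max3 fun k => ‖projPl X (toE3 (Aᵀ k))‖) ^ 2 := by
  obtain ⟨ε, k, l, hε, h⟩ := exists_smul_inv_row_eq_cross hc hdet i
  have hP := le_max3 fun k => ‖projPl X (toE3 (Aᵀ k))‖
  rw [h, projL_smul, norm_smul, Real.norm_eq_abs, hε, one_mul, sq]
  exact (norm_projL_cross_le hX _ _).trans
    (mul_le_mul (hP k) (hP l) (norm_nonneg _) (max3_norm_nonneg _))

lemma norm_projPl_smul_inv_row_le (hX : X ≠ 0) (hc : c ≠ 0) (hdet : A.det = c ∨ A.det = -c)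
    (i : Fin 3) :
    ‖projPl X (c • toE3 (A⁻¹ i))‖ ≤ 2 * (max3 fun k => ‖projPl X (toE3 (Aᵀ k))‖)
      * (max3 fun k => ‖projL X (toE3 (Aᵀ k))‖) := by
  obtain ⟨ε, k, l, hε, h⟩ := exists_smul_inv_row_eq_cross hc hdet i
  have hP := le_max3 fun k => ‖projPl X (toE3 (Aᵀ k))‖
  have hL := le_max3 fun k => ‖projL X (toE3 (Aᵀ k))‖
  rw [h, projPl_smul, norm_smul, Real.norm_eq_abs, hε, one_mul]
  refine (norm_projPl_cross_le hX _ _).trans ?_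
  nlinarith [mul_le_mul (hL k) (hP l) (norm_nonneg _) (max3_norm_nonneg _),
    mul_le_mul (hP k) (hL l) (norm_nonneg _) (max3_norm_nonneg _)]

end Polar

lemma sq_mul_le_four_mul_sq {m₁ m₂ n₁ n₂ C : ℝ} (hm₂ : 0 ≤ m₂) (hn₁ : 0 ≤ n₁) (hn₂ : 0 ≤ n₂)
    (h₁ : n₁ ≤ 2 * m₁ * m₂) (h₂ : n₂ ≤ m₁ ^ 2) (hC : m₁ ^ 2 * m₂ ≤ C) :
    n₁ ^ 2 * n₂ ≤ 4 * C ^ 2 :=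
  calc n₁ ^ 2 * n₂ ≤ (2 * m₁ * m₂) ^ 2 * m₁ ^ 2 := by gcongr
    _ = 4 * (m₁ ^ 2 * m₂) ^ 2 := by ring
    _ ≤ 4 * C ^ 2 := by gcongr

lemma tendsto_mul_of_sq_mul_le {ι : Type*} {l : Filter ι} {f g : ι → ℝ} {C : ℝ}
    (hf : ∀ i, 0 ≤ f i) (hg : ∀ i, 0 ≤ g i) (hC : ∀ᶠ i in l, f i ^ 2 * g i ≤ C)
    (hlim : Tendsto g l (nhds 0)) : Tendsto (fun i => f i * g i) l (nhds 0) := by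
  have hsqrt : Tendsto (fun i => Real.sqrt (C * g i)) l (nhds 0) := by
    simpa [Function.comp_def] using
      ((Real.continuous_sqrt.comp (continuous_const_mul C)).tendsto 0).comp hlim
  refine tendsto_of_tendsto_of_tendsto_of_le_of_le' tendsto_const_nhds hsqrt
    (Eventually.of_forall fun i => mul_nonneg (hf i) (hg i)) ?_
  filter_upwards [hC] with i hi
  refine Real.le_sqrt_of_sq_le ?_
  nlinarith [hg i]

lemma MaxDirichletPlane.maxDirichletLine {X : E3} {p q : ℕ → Fin 3 → E3}
    (hp : MaxDirichletPlane X p)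
    (hL : ∀ s i, ‖projL X (q s i)‖ ≤ (max3 fun k => ‖projPl X (p s k)‖) ^ 2)
    (hP : ∀ s i, ‖projPl X (q s i)‖ ≤ 2 * (max3 fun k => ‖projPl X (p s k)‖)
      * (max3 fun k => ‖projL X (p s k)‖)) :
    MaxDirichletLine X q := by
  obtain ⟨S, hS, ⟨C, hC⟩, hlim⟩ := hp
  refine ⟨S, hS, ⟨4 * C ^ 2, fun s hs => ?_⟩, ?_⟩
  · exact sq_mul_le_four_mul_sq (max3_norm_nonneg _) (max3_norm_nonneg _)
      (max3_norm_nonneg _) (max3_le (hP s))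
      (max3_le (hL s)) (hC s hs)
  · have h := (tendsto_mul_of_sq_mul_le (fun _ => max3_norm_nonneg _)
      (fun _ => max3_norm_nonneg _)
      (eventually_inf_principal.mpr (Eventually.of_forall hC)) hlim).const_mul 2
    rw [mul_zero] at h
    refine tendsto_of_tendsto_of_tendsto_of_le_of_le tendsto_const_nhds h
      (fun _ => max3_norm_nonneg _) fun s => ?_
    rw [← mul_assoc]
    exact max3_le (hP s)

/-- Lemma: polarity and Dirichlet property. -/
theorem polarity_dirichlet (Y : E3)
    (hind : LinearIndependent ℚ fun i : Fin 3 => Y i)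
    (P : ℕ → Matrix (Fin 3) (Fin 3) ℤ) (D : ℤ) (hD : 0 < D)
    (hdet : ∀ s, (P s).det = D ∨ (P s).det = -D)
    (hp : MaxDirichletPlane Y fun s i => toR3 fun j => P s j i) :
    MaxDirichletLine Y fun s i =>
      (D : ℝ) • toE3 fun j => (((P s).map fun z : ℤ => (z : ℝ))⁻¹) i j := by
  have hY : Y ≠ 0 := fun h => hind.ne_zero 0 (by simp [h])
  have hD₀ : (D : ℝ) ≠ 0 := by exact_mod_cast hD.ne'
  have hdetℝ (s : ℕ) : ((P s).map fun z : ℤ => (z : ℝ)).det = D ∨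
      ((P s).map fun z : ℤ => (z : ℝ)).det = -D := by
    rw [← Int.cast_det]
    exact (hdet s).imp (by simp [·]) (by simp [·])
  exact hp.maxDirichletLine (fun s i => norm_projL_smul_inv_row_le hY hD₀ (hdetℝ s) i)
    (fun s i => norm_projPl_smul_inv_row_le hY hD₀ (hdetℝ s) i)
end
end
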